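/- arXiv:2405.00297 — 10 statements merged into one kernel-verified Lean document; each statement's English description precedes it below -/
import Mathlib

section
/- Let G be a finite group, g ∈ G an involution, and S a generalized Cayley subset of G with respect to σ(g). Then for every x in the centralizer C_G(g) = {h ∈ G : h g = g h}, the left-translation map L_x : h ↦ x·h is an automorphism of the graph GC(G, S, σ(g)); moreover the set {L_x : x ∈ C_G(g)} is a subgroup of the automorphism group of GC(G, S, σ(g)). -/
/-- A subset `S` of `G` is a generalized Cayley subset with respect to the
automorphism `α` (with `α² = id`) if `α(y⁻¹)·y ∉ S` for all `y`, and
`α(h⁻¹)·y ∈ S` implies `α(y⁻¹)·h ∈ S`. -/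
def IsGenCayleySet {G : Type*} [Group G] (α : MulAut G) (S : Set G) : Prop :=
  (∀ y : G, α y⁻¹ * y ∉ S) ∧ ∀ y h : G, α h⁻¹ * y ∈ S → α y⁻¹ * h ∈ S

/-- The generalized Cayley graph `GC(G, S, α)`: distinct vertices `a b : G`
are adjacent exactly when `α(a⁻¹)·b ∈ S` (symmetrized). -/
def genCayleyGraph {G : Type*} [Group G] (α : MulAut G) (S : Set G) : SimpleGraph G :=
  SimpleGraph.fromRel (fun a b => α a⁻¹ * b ∈ S)

/-- Left translations by elements of the centralizer `C_G(g)` are automorphisms of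
`GC(G, S, σ(g))`, and they form a subgroup of the automorphism group (realized as
a subgroup of `Perm G` consisting of graph automorphisms). -/
theorem leftMul_centralizer_subgroup_of_aut {G : Type*} [Group G] [Fintype G]
    (g : G) (hg : g ^ 2 = 1 ∧ g ≠ 1)
    (S : Set G) (hS : IsGenCayleySet (MulAut.conj g) S) :
    (∀ x : G, x * g = g * x → ∀ h₁ h₂ : G,
      (genCayleyGraph (MulAut.conj g) S).Adj (x * h₁) (x * h₂) ↔
        (genCayleyGraph (MulAut.conj g) S).Adj h₁ h₂) ∧
    ∃ H : Subgroup (Equiv.Perm G),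
      (H : Set (Equiv.Perm G)) = {π | ∃ x : G, x * g = g * x ∧ π = Equiv.mulLeft x} := by
  constructor
  · intro x hx h₁ h₂
    have key : ∀ a b : G, (MulAut.conj g) (x * a)⁻¹ * (x * b) = (MulAut.conj g) a⁻¹ * b := by
      intro a b
      have hinv : x⁻¹ * g⁻¹ * x = g⁻¹ := by
        have hxg : x⁻¹ * g⁻¹ = g⁻¹ * x⁻¹ := by
          rw [← mul_inv_rev, ← hx, mul_inv_rev]
        rw [hxg]; group
      calc (MulAut.conj g) (x * a)⁻¹ * (x * b)
          = g * a⁻¹ * (x⁻¹ * g⁻¹ * x) * b := by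
            simp only [MulAut.conj_apply, mul_inv_rev]; group
        _ = (MulAut.conj g) a⁻¹ * b := by
            rw [hinv]; simp only [MulAut.conj_apply]
    simp only [genCayleyGraph, SimpleGraph.fromRel_adj, key]
    constructor
    · rintro ⟨hne, h⟩
      exact ⟨fun e => hne (by rw [e]), h⟩
    · rintro ⟨hne, h⟩
      exact ⟨fun e => hne (mul_left_cancel e), h⟩
  · refine ⟨(Subgroup.centralizer {g}).map (MulAction.toPermHom G G), ?_⟩
    ext π
    simp only [Subgroup.coe_map, Set.mem_image, SetLike.mem_coe,
      Subgroup.mem_centralizer_iff, Set.mem_singleton_iff, Set.mem_setOf_eq]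
    constructor
    · rintro ⟨x, hx, rfl⟩
      refine ⟨x, (hx g rfl).symm, ?_⟩
      ext h
      rfl
    · rintro ⟨x, hx, rfl⟩
      refine ⟨x, ?_, ?_⟩
      · intro y hy; subst hy; exact hx.symm
      · ext h; rfl
end

section
/- Let G be a finite complete group, g an involution of G, and S any generalized Cayley subset of G with respect to σ(g). Then the generalized Cayley graph GC(G, S, σ(g)) is not the complete graph on G; in fact |S| ≤ |G| − 2. -/
/-- No generalized Cayley graph of a finite complete group is the complete graph;
in fact any generalized Cayley subset `S` satisfies `|S| ≤ |G| - 2`. -/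
theorem genCayleyGraph_ne_top {G : Type*} [Group G] [Fintype G]
    (hZ : Subgroup.center G = ⊥)
    (hInn : ∀ φ : MulAut G, ∃ x : G, φ = MulAut.conj x)
    (g : G) (hg : g ^ 2 = 1 ∧ g ≠ 1)
    (S : Set G) (hS : IsGenCayleySet (MulAut.conj g) S) :
    genCayleyGraph (MulAut.conj g) S ≠ ⊤ ∧ S.ncard ≤ Nat.card G - 2 := by
  obtain ⟨hg2, hg1⟩ := hg
  have hginv : g⁻¹ = g := by
    rw [sq] at hg2
    exact inv_eq_of_mul_eq_one_left hg2
  set α := MulAut.conj g with hα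
  have hαdef : ∀ x : G, α x = g * x * g⁻¹ := fun x => rfl
  have hα2 : ∀ x : G, α (α x) = x := by
    intro x
    simp only [hαdef, hginv]
    rw [sq] at hg2
    calc g * (g * x * g) * g = (g * g) * x * (g * g) := by group
    _ = x := by rw [hg2]; group
  -- there is y₀ not commuting with conjugation by g
  have hy : ∃ y : G, α y ≠ y := by
    by_contra h
    push_neg at h
    apply hg1
    have : g ∈ Subgroup.center G := by
      rw [Subgroup.mem_center_iff]
      intro y
      have := h y
      rw [hαdef] at this
      calc y * g = g * y * g⁻¹ * g := by rw [this]
      _ = g * y := by group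
    rwa [hZ, Subgroup.mem_bot] at this
  obtain ⟨y₀, hy₀⟩ := hy
  have h1S : (1 : G) ∉ S := by simpa using hS.1 1
  constructor
  · intro htop
    have hadj : (genCayleyGraph α S).Adj (α y₀) y₀ := by
      rw [htop]
      exact hy₀
    rw [genCayleyGraph, SimpleGraph.fromRel_adj] at hadj
    rcases hadj.2 with h | h
    · apply h1S
      have : α (α y₀)⁻¹ * y₀ = 1 := by
        rw [map_inv, hα2]; group
      rwa [this] at h
    · apply h1S
      have : α y₀⁻¹ * α y₀ = 1 := by
        rw [map_inv]; group
      rwa [this] at h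
  · set T := Set.range (fun y : G => α y⁻¹ * y) with hT
    have hsub : S ⊆ Tᶜ := by
      intro s hs hsT
      obtain ⟨y, hy⟩ := hsT
      subst hy; exact hS.1 y hs
    have h1T : (1 : G) ∈ T := ⟨1, by simp⟩
    have ht0 : α y₀⁻¹ * y₀ ∈ T := ⟨y₀, rfl⟩
    have htne : α y₀⁻¹ * y₀ ≠ 1 := by
      intro h
      apply hy₀
      rw [map_inv] at h
      have : (α y₀)⁻¹ * y₀ = 1 := h
      calc α y₀ = α y₀ * ((α y₀)⁻¹ * y₀) := by rw [this]; group
      _ = y₀ := by group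
    have h2T : 2 ≤ T.ncard := by
      rw [show (2:ℕ) = 1 + 1 from rfl, Nat.add_one, Nat.succ_le_iff, Set.one_lt_ncard_iff (Set.toFinite T)]
      exact ⟨_, _, ht0, h1T, htne⟩
    have hcompl : T.ncard + Tᶜ.ncard = Nat.card G :=
      Set.ncard_add_ncard_compl T
    calc S.ncard ≤ Tᶜ.ncard := Set.ncard_le_ncard hsub (Set.toFinite _)
    _ = Nat.card G - T.ncard := by omega
    _ ≤ Nat.card G - 2 := Nat.sub_le_sub_left h2T _
end

section
/- Let G be a finite group, g ∈ G an involution, S a generalized Cayley subset of G with respect to σ(g), and x ∈ Ω_{σ(g)}(G). Then the set x·S·x = {x·s·x : s ∈ S} is also a generalized Cayley subset of G with respect to σ(g), and the graphs GC(G, S, σ(g)) and GC(G, x·S·x, σ(g)) are isomorphic (the map y ↦ y·x is an isomorphism). -/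
/-- For `x ∈ Ω_{σ(g)}(G)`, the set `x·S·x` is a generalized Cayley subset and
`GC(G, S, σ(g)) ≅ GC(G, xSx, σ(g))` via `y ↦ y·x`. -/
theorem genCayleyGraph_iso_conjSet {G : Type*} [Group G] [Fintype G]
    (g : G) (hg : g ^ 2 = 1 ∧ g ≠ 1)
    (S : Set G) (hS : IsGenCayleySet (MulAut.conj g) S)
    (x : G)
    (hx : MulAut.conj g x = x⁻¹ ∧
      x ∉ Set.range fun z : G => MulAut.conj g z⁻¹ * z) :
    IsGenCayleySet (MulAut.conj g) ((fun s => x * s * x) '' S) ∧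
    ∃ φ : genCayleyGraph (MulAut.conj g) S ≃g
        genCayleyGraph (MulAut.conj g) ((fun s => x * s * x) '' S),
      ∀ y : G, φ y = y * x := by
  have hgx : g * x * g⁻¹ = x⁻¹ := by simpa [MulAut.conj_apply] using hx.1
  have hgx' : g * x = x⁻¹ * g := by
    rw [← hgx]; group
  have hmem : ∀ t : G, t ∈ ((fun s => x * s * x) '' S) ↔ x⁻¹ * t * x⁻¹ ∈ S := by
    intro t
    constructor
    · rintro ⟨s, hs, rfl⟩
      simpa [mul_assoc] using hs
    · intro h
      exact ⟨x⁻¹ * t * x⁻¹, h, by group⟩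
  have keyid : ∀ a b : G,
      x⁻¹ * ((MulAut.conj g) a⁻¹ * b) * x⁻¹ = (MulAut.conj g) (a * x⁻¹)⁻¹ * (b * x⁻¹) := by
    intro a b
    have h2 : g * x * g⁻¹ * g = x⁻¹ * g := by rw [hgx]
    simp only [MulAut.conj_apply, mul_inv_rev, inv_inv]
    calc x⁻¹ * (g * a⁻¹ * g⁻¹ * b) * x⁻¹
        = x⁻¹ * g * (a⁻¹ * g⁻¹ * b * x⁻¹) := by group
      _ = g * x * (a⁻¹ * g⁻¹ * b * x⁻¹) := by rw [← hgx']
      _ = g * (x * a⁻¹) * g⁻¹ * (b * x⁻¹) := by group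
  have key2 : ∀ a b : G,
      ((MulAut.conj g) a⁻¹ * b ∈ ((fun s => x * s * x) '' S)) ↔
        (MulAut.conj g) (a * x⁻¹)⁻¹ * (b * x⁻¹) ∈ S := by
    intro a b
    rw [hmem, keyid]
  have key3 : ∀ a b : G,
      ((MulAut.conj g) (a * x)⁻¹ * (b * x) ∈ ((fun s => x * s * x) '' S)) ↔
        (MulAut.conj g) a⁻¹ * b ∈ S := by
    intro a b
    rw [key2]
    simp [mul_assoc]
  refine ⟨⟨fun y hy => ?_, fun y h hyh => ?_⟩, ?_⟩
  · rw [hmem, keyid] at hy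
    exact hS.1 (y * x⁻¹) hy
  · rw [key2] at hyh ⊢
    exact hS.2 _ _ hyh
  · refine ⟨⟨Equiv.mulRight x, ?_⟩, fun y => rfl⟩
    intro a b
    simp only [genCayleyGraph, SimpleGraph.fromRel_adj, Equiv.coe_mulRight, key3]
    constructor
    · rintro ⟨hne, h⟩
      exact ⟨fun h' => hne (by rw [h']), h⟩
    · rintro ⟨hne, h⟩
      exact ⟨fun h' => hne (mul_right_cancel h'), h⟩
end

section
/- Let G be a finite group, g ∈ G an involution, S a generalized Cayley subset of G with respect to σ(g), and x ∈ G an element normalizing S, i.e. x·S = S·x. Then [g,x]·S = {g⁻¹x⁻¹gx·s : s ∈ S} is also a generalized Cayley subset of G with respect to σ(g), and the graphs GC(G, S, σ(g)) and GC(G, [g,x]·S, σ(g)) are isomorphic (the map h ↦ h·x is an isomorphism). -/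
/-- For `x` normalizing `S` (i.e. `x·S = S·x`), the set `[g,x]·S` is a
generalized Cayley subset and `GC(G, S, σ(g)) ≅ GC(G, [g,x]S, σ(g))` via
`h ↦ h·x`. -/
theorem genCayleyGraph_iso_commutatorMulSet {G : Type*} [Group G] [Fintype G]
    (g : G) (hg : g ^ 2 = 1 ∧ g ≠ 1)
    (S : Set G) (hS : IsGenCayleySet (MulAut.conj g) S)
    (x : G) (hx : (fun s => x * s) '' S = (fun s => s * x) '' S) :
    IsGenCayleySet (MulAut.conj g) ((fun s => (g⁻¹ * x⁻¹ * g * x) * s) '' S) ∧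
    ∃ φ : genCayleyGraph (MulAut.conj g) S ≃g
        genCayleyGraph (MulAut.conj g) ((fun s => (g⁻¹ * x⁻¹ * g * x) * s) '' S),
      ∀ h : G, φ h = h * x := by
  obtain ⟨hg2, -⟩ := hg
  have hg1 : g * g = 1 := by rwa [← pow_two]
  have hginv : g⁻¹ = g := by
    rw [inv_eq_iff_mul_eq_one, hg1]
  have hgg : ∀ t : G, g * (g * t) = t := fun t => by rw [← mul_assoc, hg1, one_mul]
  set c : G := g⁻¹ * x⁻¹ * g * x with hc
  -- conjugation by x⁻¹ preserves S
  have hconj : ∀ t : G, x⁻¹ * t * x ∈ S ↔ t ∈ S := by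
    intro t
    constructor
    · intro ht
      have : x * (x⁻¹ * t * x) ∈ (fun s => x * s) '' S := ⟨_, ht, rfl⟩
      rw [hx] at this
      obtain ⟨s, hs, hse⟩ := this
      have : s = t := by
        have : s * x = t * x := by
          simpa [mul_assoc] using hse
        exact mul_right_cancel this
      rwa [← this]
    · intro ht
      have : t * x ∈ (fun s => s * x) '' S := ⟨_, ht, rfl⟩
      rw [← hx] at this
      obtain ⟨s, hs, hse⟩ := this
      have hst : s = x⁻¹ * t * x := by
        have : x * s = x * (x⁻¹ * t * x) := by simpa [mul_assoc] using hse
        exact mul_left_cancel this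
      rwa [← hst]
  -- membership in cS
  have hmem : ∀ b : G, b ∈ (fun s => c * s) '' S ↔ c⁻¹ * b ∈ S := by
    intro b
    constructor
    · rintro ⟨s, hs, rfl⟩
      simpa [mul_assoc] using hs
    · intro hb
      exact ⟨c⁻¹ * b, hb, by simp [mul_assoc]⟩
  -- key claim
  have key : ∀ a b : G, (MulAut.conj g) a⁻¹ * b ∈ (fun s => c * s) '' S ↔
      (MulAut.conj g) (a * x⁻¹)⁻¹ * (b * x⁻¹) ∈ S := by
    intro a b
    rw [hmem]
    have heq : c⁻¹ * ((MulAut.conj g) a⁻¹ * b) =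
        x⁻¹ * ((MulAut.conj g) (a * x⁻¹)⁻¹ * (b * x⁻¹)) * x := by
      simp only [MulAut.conj_apply, hc, hginv, mul_inv_rev, inv_inv]
      simp [mul_assoc, hgg]
    rw [heq, hconj]
  constructor
  · constructor
    · intro y hy
      rw [key] at hy
      exact hS.1 (y * x⁻¹) hy
    · intro y h hyh
      rw [key] at hyh ⊢
      exact hS.2 _ _ hyh
  · refine ⟨⟨Equiv.mulRight x, ?_⟩, fun h => rfl⟩
    intro a b
    show (genCayleyGraph (MulAut.conj g) _).Adj (a * x) (b * x) ↔
      (genCayleyGraph (MulAut.conj g) S).Adj a b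
    simp only [genCayleyGraph, SimpleGraph.fromRel_adj, key, mul_inv_cancel_right,
      mul_left_inj, ne_eq]
end

section
/- Let G be a finite complete group, let g₁, g₂ be involutions of G, and let S₁, S₂ be generalized Cayley subsets of G with respect to σ(g₁), σ(g₂) respectively, with g₁ ∉ S₁ and g₂ ∉ S₂. Suppose GC(G, S₁, σ(g₁)) is GCI-isomorphic to GC(G, S₂, σ(g₂)), i.e. there exist γ ∈ Aut(G) and x ∈ G with σ(g₂) = γ∘σ(g₁)∘γ⁻¹ and S₂ = σ(g₂)(x)·γ(S₁)·x⁻¹. Then Cay(G, g₁S₁) is CI-isomorphic to Cay(G, g₂S₂); that is, there exists y ∈ G with g₂S₂ = y·(g₁S₁)·y⁻¹, and in particular γ'(g₁S₁) = g₂S₂ for some γ' ∈ Aut(G). -/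
/-- If `GC(G,S₁,σ(g₁))` is GCI-isomorphic to `GC(G,S₂,σ(g₂))` (with `g₁ ∉ S₁`,
`g₂ ∉ S₂`), then `Cay(G, g₁S₁)` is CI-isomorphic to `Cay(G, g₂S₂)`: indeed
`g₂S₂ = y·(g₁S₁)·y⁻¹` for some `y ∈ G`, and in particular `γ'(g₁S₁) = g₂S₂`
for some automorphism `γ'`. -/
theorem gci_iso_implies_ci_iso {G : Type*} [Group G] [Fintype G]
    (hZ : Subgroup.center G = ⊥)
    (hInn : ∀ φ : MulAut G, ∃ x : G, φ = MulAut.conj x)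
    (g₁ g₂ : G) (hg₁ : g₁ ^ 2 = 1 ∧ g₁ ≠ 1) (hg₂ : g₂ ^ 2 = 1 ∧ g₂ ≠ 1)
    (S₁ S₂ : Set G)
    (hS₁ : IsGenCayleySet (MulAut.conj g₁) S₁)
    (hS₂ : IsGenCayleySet (MulAut.conj g₂) S₂)
    (hg₁S : g₁ ∉ S₁) (hg₂S : g₂ ∉ S₂)
    (hGCI : ∃ (γ : MulAut G) (x : G),
      MulAut.conj g₂ = γ * MulAut.conj g₁ * γ⁻¹ ∧
      S₂ = (fun s => MulAut.conj g₂ x * γ s * x⁻¹) '' S₁) :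
    (∃ y : G, (fun s => g₂ * s) '' S₂ =
        (fun s => y * s * y⁻¹) '' ((fun s => g₁ * s) '' S₁)) ∧
    ∃ γ' : MulAut G, (fun s => γ' s) '' ((fun s => g₁ * s) '' S₁) =
      (fun s => g₂ * s) '' S₂ := by
  obtain ⟨γ, x, hconj, hS⟩ := hGCI
  obtain ⟨c, rfl⟩ := hInn γ
  have hd : g₂ = c * g₁ * c⁻¹ := by
    have hcent : (c * g₁ * c⁻¹)⁻¹ * g₂ ∈ Subgroup.center G := by
      rw [Subgroup.mem_center_iff]
      intro z
      have h := congrArg (fun φ : MulAut G => φ z) hconj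
      simp only [MulAut.mul_apply, MulAut.conj_apply, MulAut.conj_inv_apply] at h
      have h2 : (c * g₁ * c⁻¹) * (z * ((c * g₁ * c⁻¹)⁻¹ * g₂)) = g₂ * z := by
        rw [show (c * g₁ * c⁻¹) * (z * ((c * g₁ * c⁻¹)⁻¹ * g₂))
            = (c * (g₁ * (c⁻¹ * z * c) * g₁⁻¹) * c⁻¹) * g₂ by group, ← h]
        group
      have h3 : (c * g₁ * c⁻¹) * ((c * g₁ * c⁻¹)⁻¹ * g₂ * z) = g₂ * z := by group
      exact mul_left_cancel (h2.trans h3.symm)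
    rw [hZ, Subgroup.mem_bot] at hcent
    exact (inv_mul_eq_one.mp hcent).symm
  have hg₁sq : g₁ * g₁ = 1 := by have := hg₁.1; rwa [pow_two] at this
  have hg₁inv : g₁⁻¹ = g₁ := inv_eq_of_mul_eq_one_right hg₁sq
  subst hd
  subst hS
  have key : ∀ s : G,
      (c * g₁ * c⁻¹) * (MulAut.conj (c * g₁ * c⁻¹) x * MulAut.conj c s * x⁻¹)
        = (x * c) * (g₁ * s) * (x * c)⁻¹ := by
    intro s
    simp only [MulAut.conj_apply, mul_inv_rev, hg₁inv, inv_inv]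
    simp only [mul_assoc, inv_mul_cancel_left, mul_inv_cancel_left]
    simp [← mul_assoc, hg₁sq]
  constructor
  · refine ⟨x * c, ?_⟩
    rw [Set.image_image, Set.image_image]
    exact Set.image_congr fun s _ => key s
  · refine ⟨MulAut.conj (x * c), ?_⟩
    rw [Set.image_image, Set.image_image]
    refine (Set.image_congr fun s _ => ?_).symm
    rw [key s, MulAut.conj_apply]
end

section
/- Let G be a finite complete group, let g₁, g₂ be conjugate involutions of G, and let S₁, S₂ be Cayley subsets of G satisfying S₁ ∩ C(g₁) = ∅ and S₂ ∩ C(g₂) = ∅, where C(g) denotes the conjugacy class of g. Then g₁S₁ and g₂S₂ are generalized Cayley subsets of G with respect to σ(g₁) and σ(g₂) respectively; and if Cay(G, S₁) is CI-isomorphic to Cay(G, S₂) (i.e. S₂ = γ(S₁) for some γ ∈ Aut(G)), then GC(G, g₁S₁, σ(g₁)) is GCI-isomorphic to GC(G, g₂S₂, σ(g₂)), i.e. there exist γ' ∈ Aut(G) and x ∈ G with σ(g₂) = γ'∘σ(g₁)∘γ'⁻¹ and g₂S₂ = σ(g₂)(x)·γ'(g₁S₁)·x⁻¹. -/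
lemma genCayley_aux {G : Type*} [Group G] (g : G) (hg : g ^ 2 = 1) (S : Set G)
    (hS : S⁻¹ = S) (hd : S ∩ {x | ∃ h : G, x = h * g * h⁻¹} = ∅) :
    IsGenCayleySet (MulAut.conj g) ((fun s => g * s) '' S) := by
  have hginv : g⁻¹ = g := by
    rw [sq] at hg
    exact inv_eq_of_mul_eq_one_right hg
  constructor
  · rintro y ⟨s, hs, heq⟩
    simp only [MulAut.conj_apply] at heq
    have hsy : s = y⁻¹ * g * y := by
      refine mul_left_cancel (a := g) ?_
      rw [heq, hginv]; group
    have : s ∈ S ∩ {x | ∃ h : G, x = h * g * h⁻¹} := ⟨hs, ⟨y⁻¹, by rw [hsy]; group⟩⟩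
    rw [hd] at this
    exact this
  · rintro y h ⟨s, hs, heq⟩
    simp only [MulAut.conj_apply] at heq
    have hsy : s = h⁻¹ * g * y := by
      refine mul_left_cancel (a := g) ?_
      rw [heq, hginv]; group
    refine ⟨s⁻¹, ?_, ?_⟩
    · rw [← hS]; exact Set.inv_mem_inv.mpr hs
    · simp only [MulAut.conj_apply, hsy, mul_inv_rev, inv_inv]
      group

/-- For conjugate involutions `g₁, g₂` and Cayley subsets `S₁, S₂` avoiding the
conjugacy classes `C(g₁)`, `C(g₂)`: the sets `g₁S₁`, `g₂S₂` are generalized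
Cayley subsets, and if `Cay(G,S₁)` is CI-isomorphic to `Cay(G,S₂)` then
`GC(G, g₁S₁, σ(g₁))` is GCI-isomorphic to `GC(G, g₂S₂, σ(g₂))`. -/
theorem ci_iso_implies_gci_iso {G : Type*} [Group G] [Fintype G]
    (hZ : Subgroup.center G = ⊥)
    (hInn : ∀ φ : MulAut G, ∃ x : G, φ = MulAut.conj x)
    (g₁ g₂ : G) (hg₁ : g₁ ^ 2 = 1 ∧ g₁ ≠ 1) (hg₂ : g₂ ^ 2 = 1 ∧ g₂ ≠ 1)
    (hconj : ∃ h : G, g₂ = h * g₁ * h⁻¹)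
    (S₁ S₂ : Set G)
    (hS₁ : S₁⁻¹ = S₁ ∧ (1 : G) ∉ S₁) (hS₂ : S₂⁻¹ = S₂ ∧ (1 : G) ∉ S₂)
    (hd₁ : S₁ ∩ {x | ∃ h : G, x = h * g₁ * h⁻¹} = ∅)
    (hd₂ : S₂ ∩ {x | ∃ h : G, x = h * g₂ * h⁻¹} = ∅) :
    IsGenCayleySet (MulAut.conj g₁) ((fun s => g₁ * s) '' S₁) ∧
    IsGenCayleySet (MulAut.conj g₂) ((fun s => g₂ * s) '' S₂) ∧
    ((∃ γ : MulAut G, (fun s => γ s) '' S₁ = S₂) →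
      ∃ (γ' : MulAut G) (x : G),
        MulAut.conj g₂ = γ' * MulAut.conj g₁ * γ'⁻¹ ∧
        (fun s => g₂ * s) '' S₂ =
          (fun s => MulAut.conj g₂ x * γ' s * x⁻¹) '' ((fun s => g₁ * s) '' S₁)) := by
  obtain ⟨h, hh⟩ := hconj
  refine ⟨genCayley_aux g₁ hg₁.1 S₁ hS₁.1 hd₁, genCayley_aux g₂ hg₂.1 S₂ hS₂.1 hd₂, ?_⟩
  rintro ⟨γ, hγ⟩
  obtain ⟨c, hc⟩ := hInn γ
  have hg1 : g₁ * g₁ = 1 := by rw [← sq]; exact hg₁.1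
  have hg2inv : g₂⁻¹ = g₂ := by
    have := hg₂.1
    rw [sq] at this
    exact inv_eq_of_mul_eq_one_right this
  refine ⟨MulAut.conj h, c * h⁻¹, ?_, ?_⟩
  · rw [hh, map_mul, map_mul, map_inv]
  · rw [← hγ, Set.image_image, Set.image_image]
    apply Set.image_congr
    intro s _
    simp only [hc, MulAut.conj_apply, mul_inv_rev, inv_inv, hg2inv, hh]
    group
end

section
/- Let G be a finite complete group, let g₁, g₂ be conjugate involutions of G, and let S₁, S₂ be Cayley subsets of G satisfying S₁ ∩ C(g₁) = ∅ and S₂ ∩ C(g₂) = ∅. Then Cay(G, S₁) is CI-isomorphic to Cay(G, S₂) (i.e. S₂ = γ(S₁) for some γ ∈ Aut(G)) if and only if GC(G, g₁S₁, σ(g₁)) is GCI-isomorphic to GC(G, g₂S₂, σ(g₂)), i.e. there exist γ' ∈ Aut(G) and x ∈ G with σ(g₂) = γ'∘σ(g₁)∘γ'⁻¹ and g₂S₂ = σ(g₂)(x)·γ'(g₁S₁)·x⁻¹. -/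
/-- For conjugate involutions `g₁, g₂` and Cayley subsets `S₁, S₂` avoiding the
conjugacy classes `C(g₁)`, `C(g₂)`: `Cay(G,S₁)` is CI-isomorphic to `Cay(G,S₂)`
iff `GC(G, g₁S₁, σ(g₁))` is GCI-isomorphic to `GC(G, g₂S₂, σ(g₂))`. -/
theorem ci_iso_iff_gci_iso {G : Type*} [Group G] [Fintype G]
    (hZ : Subgroup.center G = ⊥)
    (hInn : ∀ φ : MulAut G, ∃ x : G, φ = MulAut.conj x)
    (g₁ g₂ : G) (hg₁ : g₁ ^ 2 = 1 ∧ g₁ ≠ 1) (hg₂ : g₂ ^ 2 = 1 ∧ g₂ ≠ 1)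
    (hconj : ∃ h : G, g₂ = h * g₁ * h⁻¹)
    (S₁ S₂ : Set G)
    (hS₁ : S₁⁻¹ = S₁ ∧ (1 : G) ∉ S₁) (hS₂ : S₂⁻¹ = S₂ ∧ (1 : G) ∉ S₂)
    (hd₁ : S₁ ∩ {x | ∃ h : G, x = h * g₁ * h⁻¹} = ∅)
    (hd₂ : S₂ ∩ {x | ∃ h : G, x = h * g₂ * h⁻¹} = ∅) :
    (∃ γ : MulAut G, (fun s => γ s) '' S₁ = S₂) ↔
      ∃ (γ' : MulAut G) (x : G),
        MulAut.conj g₂ = γ' * MulAut.conj g₁ * γ'⁻¹ ∧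
        (fun s => g₂ * s) '' S₂ =
          (fun s => MulAut.conj g₂ x * γ' s * x⁻¹) '' ((fun s => g₁ * s) '' S₁) := by
  have conj_equiv : ∀ (φ : MulAut G) (g : G),
      MulAut.conj (φ g) = φ * MulAut.conj g * φ⁻¹ := by
    intro φ g
    ext y
    simp [MulAut.conj_apply, mul_assoc]
  have conj_inj : ∀ a b : G, MulAut.conj a = MulAut.conj b → a = b := by
    intro a b hab
    have hc : b⁻¹ * a ∈ Subgroup.center G := by
      rw [Subgroup.mem_center_iff]
      intro y
      have := congrArg (fun φ : MulAut G => φ y) hab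
      simp only [MulAut.conj_apply] at this
      -- a * y * a⁻¹ = b * y * b⁻¹
      have h2 : b⁻¹ * (a * y * a⁻¹) * b = y := by rw [this]; group
      calc y * (b⁻¹ * a) = b⁻¹ * (a * y * a⁻¹) * b * (b⁻¹ * a) := by rw [h2]
        _ = b⁻¹ * a * y := by group
    rw [hZ, Subgroup.mem_bot] at hc
    have : b * (b⁻¹ * a) = b * 1 := by rw [hc]
    simpa using this
  constructor
  · rintro ⟨γ, hγ⟩
    obtain ⟨c, hc⟩ := hInn γ
    obtain ⟨h, hh⟩ := hconj
    set x : G := c * h⁻¹ with hx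
    refine ⟨(MulAut.conj x)⁻¹ * γ, x, ?_, ?_⟩
    · have hg : ((MulAut.conj x)⁻¹ * γ) g₁ = g₂ := by
        have : (MulAut.conj x)⁻¹ = MulAut.conj x⁻¹ := by
          simp [map_inv]
        rw [this]
        simp only [MulAut.mul_apply, hc, MulAut.conj_apply, hh, hx]
        group
      rw [← hg, conj_equiv]
    · have key : ∀ s : G,
          MulAut.conj g₂ x * (((MulAut.conj x)⁻¹ * γ) (g₁ * s)) * x⁻¹
            = g₂ * γ s := by
        intro s
        have hinv : (MulAut.conj x)⁻¹ = MulAut.conj x⁻¹ := by simp [map_inv]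
        rw [hinv]
        simp only [MulAut.mul_apply, hc, MulAut.conj_apply, hh, hx, map_mul]
        group
      rw [Set.image_image, Set.image_congr' key, ← hγ, Set.image_image]
  · rintro ⟨γ', x, h1, h2⟩
    have hg : γ' g₁ = g₂ := by
      apply conj_inj
      rw [conj_equiv, h1]
    refine ⟨MulAut.conj x * γ', ?_⟩
    have key : ∀ s : G,
        MulAut.conj g₂ x * (γ' (g₁ * s)) * x⁻¹
          = g₂ * ((MulAut.conj x * γ') s) := by
      intro s
      simp only [MulAut.mul_apply, MulAut.conj_apply, map_mul, hg]
      group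
    rw [Set.image_image, Set.image_congr' key] at h2
    have h3 : (fun s => g₂ * s) '' S₂
        = (fun s => g₂ * s) '' ((fun s => (MulAut.conj x * γ') s) '' S₁) := by
      rw [Set.image_image]
      exact h2
    have hinj : Function.Injective (fun s : G => g₂ * s) :=
      mul_right_injective g₂
    exact (Set.image_injective.mpr hinj h3).symm
end

section
/- Let G be a finite complete group of even order and let g be an involution of G. Then G is a restricted GCI-group if and only if both of the following hold: (i) every involution of G is conjugate to g, and (ii) for any two generalized Cayley subsets S₁, S₂ of G with respect to σ(g), if GC(G, S₁, σ(g)) is isomorphic to GC(G, S₂, σ(g)) as graphs, then there exists x ∈ G with g·S₂ = x·(g·S₁)·x⁻¹. -/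
/-- `G` is a restricted GCI-group: for any involutory automorphisms `α₁ α₂` and
generalized Cayley subsets `S₁, S₂` w.r.t. them, any graph isomorphism
`GC(G,S₁,α₁) ≅ GC(G,S₂,α₂)` forces `α₂ = γ∘α₁∘γ⁻¹` and
`S₂ = α₂(g)·γ(S₁)·g⁻¹` for some `γ ∈ Aut G`, `g ∈ G`. -/
def IsRestrictedGCI (G : Type*) [Group G] : Prop :=
  ∀ α₁ α₂ : MulAut G, α₁ ^ 2 = 1 → α₁ ≠ 1 → α₂ ^ 2 = 1 → α₂ ≠ 1 →
    ∀ S₁ S₂ : Set G, IsGenCayleySet α₁ S₁ → IsGenCayleySet α₂ S₂ →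
      Nonempty (genCayleyGraph α₁ S₁ ≃g genCayleyGraph α₂ S₂) →
      ∃ (γ : MulAut G) (g : G),
        α₂ = γ * α₁ * γ⁻¹ ∧ S₂ = (fun s => α₂ g * γ s * g⁻¹) '' S₁



section Aux
variable {G : Type*} [Group G]

lemma conj_inj_of_center_bot (hZ : Subgroup.center G = ⊥) {a b : G}
    (h : MulAut.conj a = MulAut.conj b) : a = b := by
  have h' : ∀ x : G, a * x * a⁻¹ = b * x * b⁻¹ := fun x => by
    have := MulEquiv.ext_iff.mp h x
    simpa [MulAut.conj_apply] using this
  have hm : b⁻¹ * a ∈ Subgroup.center G := by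
    rw [Subgroup.mem_center_iff]
    intro x
    have := congrArg (fun t => b⁻¹ * t * a) (h' x)
    simp only [mul_assoc, inv_mul_cancel_left, inv_mul_cancel, mul_one] at this
    simp only [mul_assoc]
    rw [this]
  rw [hZ, Subgroup.mem_bot] at hm
  have := congrArg (fun t => b * t) hm
  simpa [mul_assoc] using this

lemma mem_conjImage {x t : G} {S : Set G} :
    t ∈ (fun s => x⁻¹ * s * x) '' S ↔ x * t * x⁻¹ ∈ S := by
  constructor
  · rintro ⟨s, hs, rfl⟩
    simpa [mul_assoc] using hs
  · intro h
    exact ⟨x * t * x⁻¹, h, by simp [mul_assoc]⟩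

lemma mem_key (g x u v : G) (S : Set G) :
    (MulAut.conj g) u⁻¹ * v ∈ (fun s => x⁻¹ * s * x) '' S ↔
      (MulAut.conj (x * g * x⁻¹)) (x * u * x⁻¹)⁻¹ * (x * v * x⁻¹) ∈ S := by
  rw [mem_conjImage, MulAut.conj_apply, MulAut.conj_apply,
    show x * (g * u⁻¹ * g⁻¹ * v) * x⁻¹
        = x * g * x⁻¹ * (x * u * x⁻¹)⁻¹ * (x * g * x⁻¹)⁻¹ * (x * v * x⁻¹) from by group]

lemma isGenCayleySet_conj {g x : G} {S : Set G}
    (hS : IsGenCayleySet (MulAut.conj (x * g * x⁻¹)) S) :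
    IsGenCayleySet (MulAut.conj g) ((fun s => x⁻¹ * s * x) '' S) := by
  constructor
  · intro y hy
    rw [mem_key] at hy
    exact hS.1 (x * y * x⁻¹) hy
  · intro y h hy
    rw [mem_key] at hy ⊢
    exact hS.2 (x * y * x⁻¹) (x * h * x⁻¹) hy

def conjIso (g x : G) (S : Set G) :
    genCayleyGraph (MulAut.conj (x * g * x⁻¹)) S ≃g
      genCayleyGraph (MulAut.conj g) ((fun s => x⁻¹ * s * x) '' S) where
  toEquiv :=
  { toFun := fun a => x⁻¹ * a * x
    invFun := fun a => x * a * x⁻¹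
    left_inv := fun a => by simp [mul_assoc]
    right_inv := fun a => by simp [mul_assoc] }
  map_rel_iff' := by
    intro a b
    simp only [genCayleyGraph, SimpleGraph.fromRel_adj, Equiv.coe_fn_mk, ne_eq,
      mul_left_inj, mul_right_inj]
    rw [mem_key, mem_key,
      show x * (x⁻¹ * a * x) * x⁻¹ = a from by group,
      show x * (x⁻¹ * b * x) * x⁻¹ = b from by group]

end Aux

/-- A finite complete group `G` of even order with involution `g` is a restricted
GCI-group iff every involution of `G` is conjugate to `g` and isomorphic
generalized Cayley graphs `GC(G,S₁,σ(g)) ≅ GC(G,S₂,σ(g))` force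
`g·S₂ = x·(g·S₁)·x⁻¹` for some `x ∈ G`. -/
theorem restrictedGCI_iff {G : Type*} [Group G] [Fintype G]
    (hZ : Subgroup.center G = ⊥)
    (hInn : ∀ φ : MulAut G, ∃ x : G, φ = MulAut.conj x)
    (hEven : Even (Nat.card G))
    (g : G) (hg : g ^ 2 = 1 ∧ g ≠ 1) :
    IsRestrictedGCI G ↔
      ((∀ h : G, h ^ 2 = 1 → h ≠ 1 → ∃ x : G, h = x * g * x⁻¹) ∧
        ∀ S₁ S₂ : Set G,
          IsGenCayleySet (MulAut.conj g) S₁ → IsGenCayleySet (MulAut.conj g) S₂ →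
          Nonempty (genCayleyGraph (MulAut.conj g) S₁ ≃g
            genCayleyGraph (MulAut.conj g) S₂) →
          ∃ x : G, (fun s => g * s) '' S₂ =
            (fun s => x * s * x⁻¹) '' ((fun s => g * s) '' S₁)) := by
  obtain ⟨hg2, hgne⟩ := hg
  have hgg : g * g = 1 := by rw [← pow_two]; exact hg2
  have hginv : g⁻¹ = g := inv_eq_of_mul_eq_one_right hgg
  have hgcan : ∀ t : G, g * (g * t) = t := fun t => by rw [← mul_assoc, hgg, one_mul]
  have hconjg_sq : (MulAut.conj g) ^ 2 = 1 := by rw [← map_pow, hg2, map_one]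
  have hconjg_ne : MulAut.conj g ≠ 1 := fun h =>
    hgne (conj_inj_of_center_bot hZ (by rw [h, map_one]))
  constructor
  · intro hGCI
    have hemp : ∀ α : MulAut G, IsGenCayleySet α (∅ : Set G) :=
      fun α => ⟨fun y => Set.notMem_empty _, fun y h hy => absurd hy (Set.notMem_empty _)⟩
    constructor
    · intro h hh2 hhne
      have hiso : Nonempty (genCayleyGraph (MulAut.conj g) (∅ : Set G) ≃g
          genCayleyGraph (MulAut.conj h) (∅ : Set G)) :=
        ⟨{ toEquiv := Equiv.refl G
           map_rel_iff' := by
             intro a b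
             simp [genCayleyGraph, SimpleGraph.fromRel_adj] }⟩
      obtain ⟨γ, a, hγ, -⟩ := hGCI (MulAut.conj g) (MulAut.conj h) hconjg_sq hconjg_ne
        (by rw [← map_pow, hh2, map_one])
        (fun H => hhne (conj_inj_of_center_bot hZ (by rw [H, map_one])))
        ∅ ∅ (hemp _) (hemp _) hiso
      obtain ⟨y, rfl⟩ := hInn γ
      refine ⟨y, conj_inj_of_center_bot hZ ?_⟩
      have e : MulAut.conj (y * g * y⁻¹)
          = MulAut.conj y * MulAut.conj g * (MulAut.conj y)⁻¹ := by
        rw [map_mul, map_mul, map_inv]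
      rw [hγ, e]
    · intro S₁ S₂ hS₁ hS₂ hiso
      obtain ⟨γ, a, hγ, hset⟩ := hGCI (MulAut.conj g) (MulAut.conj g) hconjg_sq hconjg_ne
        hconjg_sq hconjg_ne S₁ S₂ hS₁ hS₂ hiso
      obtain ⟨y, rfl⟩ := hInn γ
      have hyg : y * g * y⁻¹ = g := by
        refine conj_inj_of_center_bot hZ ?_
        rw [map_mul, map_mul, map_inv, ← hγ]
      have hcomm : g * y = y * g := by
        calc g * y = (y * g * y⁻¹) * y := by rw [hyg]
        _ = y * g := by simp [mul_assoc]
      have hswap : ∀ t : G, g * (y * t) = y * (g * t) := fun t => by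
        rw [← mul_assoc, hcomm, mul_assoc]
      refine ⟨a * y, ?_⟩
      rw [hset, Set.image_image, Set.image_image]
      apply Set.image_congr'
      intro s
      simp only [MulAut.conj_apply, mul_assoc, mul_inv_rev, hginv, hgcan, hswap]
  · rintro ⟨hconj, hmain⟩
    intro α₁ α₂ hα₁sq hα₁ne hα₂sq hα₂ne S₁ S₂ hS₁ hS₂ hiso
    obtain ⟨φ⟩ := hiso
    obtain ⟨u₁, rfl⟩ := hInn α₁
    obtain ⟨u₂, rfl⟩ := hInn α₂
    have hu₁2 : u₁ ^ 2 = 1 := conj_inj_of_center_bot hZ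
      (by rw [map_pow, map_one]; exact hα₁sq)
    have hu₁ne : u₁ ≠ 1 := fun h => hα₁ne (by rw [h, map_one])
    have hu₂2 : u₂ ^ 2 = 1 := conj_inj_of_center_bot hZ
      (by rw [map_pow, map_one]; exact hα₂sq)
    have hu₂ne : u₂ ≠ 1 := fun h => hα₂ne (by rw [h, map_one])
    obtain ⟨x₁, hx₁⟩ := hconj u₁ hu₁2 hu₁ne
    obtain ⟨x₂, hx₂⟩ := hconj u₂ hu₂2 hu₂ne
    subst hx₁; subst hx₂
    have hT₁ := isGenCayleySet_conj (g := g) (x := x₁) hS₁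
    have hT₂ := isGenCayleySet_conj (g := g) (x := x₂) hS₂
    have ψ : genCayleyGraph (MulAut.conj g) ((fun s => x₁⁻¹ * s * x₁) '' S₁) ≃g
        genCayleyGraph (MulAut.conj g) ((fun s => x₂⁻¹ * s * x₂) '' S₂) :=
      ((conjIso g x₁ S₁).symm.trans φ).trans (conjIso g x₂ S₂)
    obtain ⟨w, hw⟩ := hmain _ _ hT₁ hT₂ ⟨ψ⟩
    refine ⟨MulAut.conj (x₂ * x₁⁻¹), x₂ * w * x₂⁻¹, ?_, ?_⟩
    · ext t
      simp only [← map_inv, MulAut.mul_apply, MulAut.conj_apply]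
      group
    · have e1 : (fun u => x₂ * g * u * x₂⁻¹) '' ((fun s => g * s) ''
          ((fun s => x₂⁻¹ * s * x₂) '' S₂)) = S₂ := by
        rw [Set.image_image, Set.image_image]
        have e0 : ∀ s : G, x₂ * g * (g * (x₂⁻¹ * s * x₂)) * x₂⁻¹ = s := fun s => by
          simp only [mul_assoc, hgcan, mul_inv_cancel, mul_one, mul_inv_cancel_left]
        simp only [e0, Set.image_id']
      rw [← e1, hw, Set.image_image, Set.image_image, Set.image_image]
      apply Set.image_congr'
      intro s
      simp only [MulAut.conj_apply, mul_assoc, mul_inv_rev, inv_inv, hginv,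
        inv_mul_cancel_left, mul_inv_cancel_left]
end

section
/- Let G be a finite complete group of even order which is a restricted GCI-group. Then for every involution g of G, Ω_{σ(g)}(G) = {g}; that is, the only element x ∈ G with σ(g)(x) = x⁻¹ and x ∉ {σ(g)(y⁻¹)·y : y ∈ G} is x = g. -/
section Aux

variable {G : Type*} [Group G]

lemma aux_apply_apply {α : MulAut G} (hα : α ^ 2 = 1) (z : G) : α (α z) = z := by
  have := congrArg (fun β : MulAut G => β z) hα
  simpa [sq, MulAut.mul_apply] using this

lemma aux_isGenCayleySet_singleton {α : MulAut G} (hα : α ^ 2 = 1) {x : G}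
    (hx : α x = x⁻¹) (hxr : x ∉ Set.range fun y : G => α y⁻¹ * y) :
    IsGenCayleySet α {x} := by
  constructor
  · intro y hy
    simp only [Set.mem_singleton_iff] at hy
    exact hxr ⟨y, hy⟩
  · intro y h hy
    simp only [Set.mem_singleton_iff] at hy ⊢
    have h1 : α (α h⁻¹ * y) = α x := congrArg α hy
    rw [map_mul, map_inv, map_inv, aux_apply_apply hα, hx] at h1
    -- h1 : h⁻¹ * α y = x⁻¹
    have h2 : (h⁻¹ * α y)⁻¹ = (x⁻¹)⁻¹ := by rw [h1]
    rw [map_inv]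
    simpa [mul_inv_rev] using h2

lemma aux_matching_involutive {α : MulAut G} (hα : α ^ 2 = 1) {x : G} (hx : α x = x⁻¹) :
    Function.Involutive (fun a => α a * x) := by
  intro a
  simp only [map_mul, aux_apply_apply hα, hx]
  group

lemma aux_matching_ne {α : MulAut G} {x : G}
    (hxr : x ∉ Set.range fun y : G => α y⁻¹ * y) (a : G) : α a * x ≠ a := by
  intro h
  refine hxr ⟨a, ?_⟩
  show α a⁻¹ * a = x
  rw [map_inv]
  exact inv_mul_eq_iff_eq_mul.mpr h.symm

lemma aux_adj_iff {α : MulAut G} (hα : α ^ 2 = 1) {x : G} (hx : α x = x⁻¹)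
    (hxr : x ∉ Set.range fun y : G => α y⁻¹ * y) (a b : G) :
    (genCayleyGraph α ({x} : Set G)).Adj a b ↔ α a * x = b := by
  rw [genCayleyGraph, SimpleGraph.fromRel_adj]
  simp only [Set.mem_singleton_iff]
  constructor
  · rintro ⟨hne, h | h⟩
    · rw [map_inv] at h
      exact (inv_mul_eq_iff_eq_mul.mp h).symm
    · rw [map_inv] at h
      have ha : a = α b * x := inv_mul_eq_iff_eq_mul.mp h
      rw [ha]
      simpa using aux_matching_involutive hα hx b
  · intro h
    refine ⟨?_, Or.inl ?_⟩
    · rintro rfl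
      exact aux_matching_ne hxr a h
    · rw [map_inv]
      exact inv_mul_eq_iff_eq_mul.mpr h.symm

lemma aux_cycleType_fpf {X : Type*} [Fintype X] [DecidableEq X] [Nonempty X]
    (σ : Equiv.Perm X) (h2 : σ ^ 2 = 1) (hfpf : ∀ a, σ a ≠ a) :
    σ.cycleType = Multiset.replicate (Fintype.card X / 2) 2 := by
  have hne : σ ≠ 1 := by
    intro h
    exact hfpf (Classical.arbitrary X) (by simp [h])
  haveI : Fact (Nat.Prime 2) := ⟨Nat.prime_two⟩
  have horder : orderOf σ = 2 := orderOf_eq_prime h2 hne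
  have hmem : ∀ n ∈ σ.cycleType, n = 2 := by
    intro n hn
    have hdvd : n ∣ 2 := by
      rw [← horder, ← Equiv.Perm.lcm_cycleType]
      exact Multiset.dvd_lcm hn
    have h2le := Equiv.Perm.two_le_of_mem_cycleType hn
    exact le_antisymm (Nat.le_of_dvd (by norm_num) hdvd) h2le
  have hrep : σ.cycleType = Multiset.replicate (Multiset.card σ.cycleType) 2 :=
    Multiset.eq_replicate_card.mpr hmem
  have hsup : σ.support = Finset.univ := by
    ext a
    simp [Equiv.Perm.mem_support, hfpf a]
  have hsum : σ.cycleType.sum = Fintype.card X := by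
    rw [Equiv.Perm.sum_cycleType, hsup, Finset.card_univ]
  have hsum2 : Multiset.card σ.cycleType * 2 = Fintype.card X := by
    rw [← hsum]
    conv_rhs => rw [hrep]
    rw [Multiset.sum_replicate, smul_eq_mul]
  rw [hrep]
  congr 1
  omega

end Aux

/-- In a finite complete restricted GCI-group of even order, for every involution
`g` one has `Ω_{σ(g)}(G) = {g}`. -/
theorem Omega_eq_singleton_of_restrictedGCI {G : Type*} [Group G] [Fintype G]
    (hZ : Subgroup.center G = ⊥)
    (hInn : ∀ φ : MulAut G, ∃ x : G, φ = MulAut.conj x)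
    (hEven : Even (Nat.card G))
    (hGCI : IsRestrictedGCI G) :
    ∀ g : G, g ^ 2 = 1 → g ≠ 1 →
      {x : G | MulAut.conj g x = x⁻¹ ∧
        x ∉ Set.range fun y : G => MulAut.conj g y⁻¹ * y} = {g} := by
  intro g hg2 hg1
  classical
  have hconj_inj : Function.Injective (MulAut.conj : G → MulAut G) := by
    intro a b hab
    have key : ∀ z, a * z * a⁻¹ = b * z * b⁻¹ := fun z => by
      simpa [MulAut.conj_apply] using congrArg (fun φ : MulAut G => φ z) hab
    have hc : b⁻¹ * a ∈ Subgroup.center G := by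
      rw [Subgroup.mem_center_iff]
      intro z
      calc z * (b⁻¹ * a) = b⁻¹ * (b * z * b⁻¹) * a := by group
        _ = b⁻¹ * (a * z * a⁻¹) * a := by rw [key z]
        _ = (b⁻¹ * a) * z := by group
    rw [hZ, Subgroup.mem_bot] at hc
    exact (inv_mul_eq_one.mp hc).symm
  set α : MulAut G := MulAut.conj g with hαdef
  have hα2 : α ^ 2 = 1 := by rw [hαdef, ← map_pow, hg2, map_one]
  have hα1 : α ≠ 1 := by
    intro h
    exact hg1 (hconj_inj (by rw [← hαdef, h, map_one]))
  have hginv : g⁻¹ = g := inv_eq_of_mul_eq_one_right (by rw [← sq, hg2])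
  have hgx : α g = g⁻¹ := by
    rw [hginv, hαdef, MulAut.conj_apply]
    group
  have hgr : g ∉ Set.range fun y : G => α y⁻¹ * y := by
    rintro ⟨y, hy⟩
    simp only [hαdef, MulAut.conj_apply] at hy
    -- hy : g * y⁻¹ * g⁻¹ * y = g
    apply hg1
    have h1 : y⁻¹ * g⁻¹ * y = 1 := by
      have := congrArg (fun w => g⁻¹ * w) hy
      simpa [mul_assoc] using this
    have h2 : g⁻¹ = 1 := by
      have := congrArg (fun w => y * w * y⁻¹) h1
      simpa [mul_assoc] using this
    rw [← hginv, h2]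
  ext x
  simp only [Set.mem_setOf_eq, Set.mem_singleton_iff]
  constructor
  · rintro ⟨hx, hxr⟩
    have hx' : α x = x⁻¹ := hx
    have hxr' : x ∉ Set.range fun y : G => α y⁻¹ * y := hxr
    have hS1 := aux_isGenCayleySet_singleton hα2 hx' hxr'
    have hS2 := aux_isGenCayleySet_singleton hα2 hgx hgr
    -- the two matchings
    have hi1 := aux_matching_involutive hα2 hx'
    have hi2 := aux_matching_involutive hα2 hgx
    set m₁ : Equiv.Perm G := hi1.toPerm with hm1
    set m₂ : Equiv.Perm G := hi2.toPerm with hm2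
    have hm1a : ∀ a, m₁ a = α a * x := fun a => rfl
    have hm2a : ∀ a, m₂ a = α a * g := fun a => rfl
    have hm1sq : m₁ ^ 2 = 1 := by
      ext a
      simp only [sq, Equiv.Perm.mul_apply, Equiv.Perm.one_apply, hm1a]
      simpa using hi1 a
    have hm2sq : m₂ ^ 2 = 1 := by
      ext a
      simp only [sq, Equiv.Perm.mul_apply, Equiv.Perm.one_apply, hm2a]
      simpa using hi2 a
    have hfpf1 : ∀ a, m₁ a ≠ a := fun a => by
      rw [hm1a]; exact aux_matching_ne hxr' a
    have hfpf2 : ∀ a, m₂ a ≠ a := fun a => by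
      rw [hm2a]; exact aux_matching_ne hgr a
    have hct : m₁.cycleType = m₂.cycleType := by
      rw [aux_cycleType_fpf m₁ hm1sq hfpf1, aux_cycleType_fpf m₂ hm2sq hfpf2]
    obtain ⟨π, hπ⟩ := isConj_iff.mp (Equiv.Perm.isConj_iff_cycleType_eq.mpr hct)
    have hsemi : ∀ a, π (m₁ a) = m₂ (π a) := by
      intro a
      have : (π * m₁) a = (m₂ * π) a := by
        rw [show π * m₁ = m₂ * π from by
          rw [← hπ]; group]
      simpa [Equiv.Perm.mul_apply] using this
    have hiso : Nonempty (genCayleyGraph α ({x} : Set G) ≃g genCayleyGraph α ({g} : Set G)) := by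
      refine ⟨⟨π, ?_⟩⟩
      intro a b
      rw [aux_adj_iff hα2 hgx hgr, aux_adj_iff hα2 hx' hxr']
      constructor
      · intro h
        have : π (m₁ a) = π b := by
          rw [hsemi a, hm2a]
          exact h
        have := π.injective this
        rwa [hm1a] at this
      · intro h
        have : π (m₁ a) = π b := congrArg π (by rw [hm1a]; exact h)
        rw [hsemi a, hm2a] at this
        exact this
    obtain ⟨γ, h, hγα, hS⟩ := hGCI α α hα2 hα1 hα2 hα1 {x} {g} hS1 hS2 hiso
    obtain ⟨c, rfl⟩ := hInn γ
    -- from hγα : α = conj c * α * (conj c)⁻¹  deduce g = c * g * c⁻¹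
    have hcg : g = c * g * c⁻¹ := by
      apply hconj_inj
      rw [← hαdef]
      rw [hγα, hαdef]
      rw [← map_inv, ← map_mul, ← map_mul]
    -- from hS : {g} = image of {x}
    rw [Set.image_singleton, Set.singleton_eq_singleton_iff] at hS
    -- hS : g = α h * (MulAut.conj c) x * h⁻¹
    rw [hαdef] at hS
    simp only [MulAut.conj_apply] at hS
    have heq : (g * h * g⁻¹) * (c * x * c⁻¹) * h⁻¹ = g := hS.symm
    have h3 : c * x * c⁻¹ = g := by
      calc c * x * c⁻¹
          = (g * h * g⁻¹)⁻¹ * ((g * h * g⁻¹) * (c * x * c⁻¹) * h⁻¹) * h := by group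
        _ = (g * h * g⁻¹)⁻¹ * g * h := by rw [heq]
        _ = g := by group
    calc x = c⁻¹ * (c * x * c⁻¹) * c := by group
      _ = c⁻¹ * g * c := by rw [h3]
      _ = c⁻¹ * (c * g * c⁻¹) * c := by rw [← hcg]
      _ = g := by group
  · rintro rfl
    exact ⟨hgx, hgr⟩
end

section
/- Let G be a finite complete group of even order whose order is not divisible by 4. Then for every involution g of G, Ω_{σ(g)}(G) = {g}; that is, the only element x ∈ G with σ(g)(x) = x⁻¹ and x ∉ {σ(g)(y⁻¹)·y : y ∈ G} is x = g. -/
private lemma sign_mulLeft_neg_one {G : Type*} [Group G] [Fintype G] [DecidableEq G]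
    (g : G) (hg2 : g ^ 2 = 1) (hg1 : g ≠ 1) (hodd : Odd (Fintype.card G / 2))
    (h2 : 2 ∣ Fintype.card G) :
    Equiv.Perm.sign (MulAction.toPermHom G G g) = -1 := by
  haveI : Fact (Nat.Prime 2) := ⟨Nat.prime_two⟩
  set p := MulAction.toPermHom G G g with hp
  have hp2 : p ^ 2 = 1 := by rw [hp, ← map_pow, hg2, map_one]
  have hp1 : p ≠ 1 := by
    intro h
    apply hg1
    have := congrFun (congrArg (fun q : Equiv.Perm G => (q : G → G)) h) 1
    simpa [hp] using this
  have horder : orderOf p = 2 := orderOf_eq_prime hp2 hp1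
  have hsupp : p.support = Finset.univ := by
    apply Finset.eq_univ_iff_forall.mpr
    intro a
    rw [Equiv.Perm.mem_support]
    intro h
    apply hg1
    have : g * a = a := by simpa [hp] using h
    exact mul_eq_right.mp this
  have hall : ∀ n ∈ p.cycleType, n = 2 := by
    intro n hn
    have hdvd : n ∣ 2 := by
      rw [← horder, ← Equiv.Perm.lcm_cycleType]
      exact Multiset.dvd_lcm hn
    exact le_antisymm (Nat.le_of_dvd (by norm_num) hdvd)
      (Equiv.Perm.two_le_of_mem_cycleType hn)
  have hrep : p.cycleType = Multiset.replicate (Multiset.card p.cycleType) 2 :=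
    Multiset.eq_replicate_card.mpr hall
  have hsum : p.cycleType.sum = Fintype.card G := by
    rw [Equiv.Perm.sum_cycleType, hsupp, Finset.card_univ]
  have hc : 2 * Multiset.card p.cycleType = Fintype.card G := by
    rw [← hsum, hrep]
    simp [Multiset.sum_replicate, mul_comm]
  rw [Equiv.Perm.sign_of_cycleType, hsum]
  apply Odd.neg_one_pow
  rw [Nat.odd_iff] at hodd ⊢
  omega

/-- In a finite complete group of even order not divisible by 4, for every
involution `g` one has `Ω_{σ(g)}(G) = {g}`. -/
theorem Omega_eq_singleton_of_not_four_dvd {G : Type*} [Group G] [Fintype G]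
    (hZ : Subgroup.center G = ⊥)
    (hInn : ∀ φ : MulAut G, ∃ x : G, φ = MulAut.conj x)
    (hEven : Even (Nat.card G)) (h4 : ¬ (4 ∣ Nat.card G)) :
    ∀ g : G, g ^ 2 = 1 → g ≠ 1 →
      {x : G | MulAut.conj g x = x⁻¹ ∧
        x ∉ Set.range fun y : G => MulAut.conj g y⁻¹ * y} = {g} := by
  classical
  intro g hg2 hg1
  have hgg : g * g = 1 := by rw [← pow_two]; exact hg2
  have hginv : g⁻¹ = g := inv_eq_of_mul_eq_one_right hgg
  have hcard : Nat.card G = Fintype.card G := Nat.card_eq_fintype_card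
  have h2 : 2 ∣ Fintype.card G := by
    obtain ⟨k, hk⟩ := hEven; rw [hcard] at hk; omega
  have hodd : Odd (Fintype.card G / 2) := by
    rw [hcard] at hEven h4
    obtain ⟨k, hk⟩ := hEven
    rw [Nat.odd_iff]
    omega
  set φ : G →* ℤˣ := Equiv.Perm.sign.comp (MulAction.toPermHom G G) with hφdef
  have hφg : φ g = -1 := sign_mulLeft_neg_one g hg2 hg1 hodd h2
  have hsurj : Function.Surjective φ := by
    intro u
    rcases Int.units_eq_one_or u with h | h
    · exact ⟨1, by rw [h, map_one]⟩
    · exact ⟨g, by rw [h, hφg]⟩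
  have hunits : Nat.card ℤˣ = 2 := by
    rw [Nat.card_eq_fintype_card]; decide
  have hindex : φ.ker.index = 2 := by
    rw [Subgroup.index_ker, MonoidHom.range_eq_top.mpr hsurj, ← hunits]
    exact Nat.card_congr Subgroup.topEquiv.toEquiv
  have hkercard : Nat.card φ.ker * 2 = Nat.card G := by
    rw [← hindex]; exact Subgroup.card_mul_index φ.ker
  have hkerodd : Odd (Nat.card φ.ker) := by
    rw [Nat.odd_iff]
    rw [hcard] at hkercard
    rw [Nat.odd_iff] at hodd
    omega
  have hodd_of_ker : ∀ x : G, x ∈ φ.ker → Odd (orderOf x) := by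
    intro x hx
    have hd : orderOf x ∣ Nat.card φ.ker := Subgroup.orderOf_dvd_natCard φ.ker hx
    rw [Nat.odd_iff] at hkerodd ⊢
    rcases Nat.even_or_odd (orderOf x) with he | ho
    · exfalso
      have : 2 ∣ Nat.card φ.ker := dvd_trans he.two_dvd hd
      omega
    · exact Nat.odd_iff.mp ho
  ext x
  simp only [Set.mem_setOf_eq, Set.mem_singleton_iff]
  constructor
  · rintro ⟨hx1, hx2⟩
    rw [MulAut.conj_apply] at hx1
    by_cases hxk : φ x = 1
    · exfalso
      apply hx2
      have hxker : x ∈ φ.ker := MonoidHom.mem_ker.mpr hxk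
      obtain ⟨m, hm⟩ := hodd_of_ker x hxker
      refine ⟨x ^ (m + 1), ?_⟩
      show MulAut.conj g (x ^ (m + 1))⁻¹ * x ^ (m + 1) = x
      have hcz : MulAut.conj g (x ^ (m + 1)) = (x ^ (m + 1))⁻¹ := by
        rw [map_pow, MulAut.conj_apply, hx1, inv_pow]
      rw [map_inv, hcz, inv_inv, ← pow_add]
      have hord : x ^ orderOf x = 1 := pow_orderOf_eq_one x
      calc x ^ (m + 1 + (m + 1)) = x ^ (2 * m + 1) * x := by
            rw [← pow_succ]; ring_nf
        _ = x := by rw [← hm, hord, one_mul]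
    · have hxneg : φ x = -1 := by
        rcases Int.units_eq_one_or (φ x) with h | h
        · exact absurd h hxk
        · exact h
      have hng : φ (x * g) = 1 := by
        rw [map_mul, hxneg, hφg]; decide
      have hnker : x * g ∈ φ.ker := MonoidHom.mem_ker.mpr hng
      have hsq : (x * g) * (x * g) = 1 := by
        have : g * x * g = x⁻¹ := by rw [← hx1, hginv]
        calc (x * g) * (x * g) = x * (g * x * g) := by group
          _ = x * x⁻¹ := by rw [this]
          _ = 1 := mul_inv_cancel x
      have hdvd2 : orderOf (x * g) ∣ 2 := orderOf_dvd_of_pow_eq_one (by rw [pow_two]; exact hsq)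
      have hno : Odd (orderOf (x * g)) := hodd_of_ker _ hnker
      have h1 : orderOf (x * g) = 1 := by
        rcases (Nat.dvd_prime Nat.prime_two).mp hdvd2 with h | h
        · exact h
        · exfalso; rw [h, Nat.odd_iff] at hno; omega
      have : x * g = 1 := orderOf_eq_one_iff.mp h1
      calc x = x * g * g⁻¹ := by group
        _ = g := by rw [this, one_mul, hginv]
  · rintro rfl
    refine ⟨?_, ?_⟩
    · rw [MulAut.conj_apply, hginv, hgg, one_mul]
    · rintro ⟨y, hy⟩
      apply hg1
      simp only [MulAut.conj_apply] at hy
      have h1 : y⁻¹ * x⁻¹ * y = 1 := by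
        apply mul_left_cancel (a := x)
        rw [← mul_assoc, ← mul_assoc, hy, mul_one]
      have hg1' : x⁻¹ = 1 := by
        have h2 := congrArg (fun t => y * t * y⁻¹) h1
        simpa [mul_assoc] using h2
      exact inv_eq_one.mp hg1'
end
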